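/- arXiv:math/0009091 — 9 statements merged into one kernel-verified Lean document; each statement's English description precedes it below -/
import Mathlib

section
/- If G ◁ H, G has trivial center, the quotient H/G is isomorphic to G, and every coset of G in H contains an element of the centralizer of G in H, then H is isomorphic to G × G. -/
/-- If `G ◁ H`, `G` has trivial center, `H/G ≅ G`, and every coset of `G`
in `H` contains an element of the centralizer of `G` in `H`, then `H ≅ G × G`. -/
theorem stmt_1 {H : Type*} [Group H] (G : Subgroup H) [G.Normal]
    (hZ : Subgroup.center G = ⊥)
    (hquot : Nonempty ((H ⧸ G) ≃* G))
    (hcoset : ∀ h : H, ∃ c ∈ Subgroup.centralizer (G : Set H), h⁻¹ * c ∈ G) :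
    Nonempty (H ≃* G × G) := by
  set C := Subgroup.centralizer (G : Set H) with hC
  -- key: G ∩ C is trivial
  have key : ∀ x : H, x ∈ G → x ∈ C → x = 1 := by
    intro x hxG hxC
    have hx : (⟨x, hxG⟩ : G) ∈ Subgroup.center G := by
      rw [Subgroup.mem_center_iff]
      intro g
      ext
      exact Subgroup.mem_centralizer_iff.mp hxC g g.2
    rw [hZ, Subgroup.mem_bot] at hx
    exact congrArg Subtype.val hx
  -- φ : G × C →* H
  let φ : G × C →* H := MonoidHom.noncommCoprod G.subtype C.subtype
    (fun g c => ((Subgroup.mem_centralizer_iff.mp c.2) g g.2))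
  have hφ : ∀ p : G × C, φ p = (p.1 : H) * (p.2 : H) := fun p => rfl
  have φbij : Function.Bijective φ := by
    constructor
    · rw [injective_iff_map_eq_one]
      intro ⟨g, c⟩ h
      rw [hφ] at h
      have hg : (g : H) = (c : H)⁻¹ := by
        rwa [mul_eq_one_iff_eq_inv] at h
      have hgC : (g : H) ∈ C := hg ▸ C.inv_mem c.2
      have : (g : H) = 1 := key g g.2 hgC
      have hc : (c : H) = 1 := by
        rw [this] at hg; simpa using hg.symm
      ext <;> simp [this, hc]
    · intro h
      obtain ⟨c, hcC, hg⟩ := hcoset h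
      have comm : (h⁻¹ * c) * c = c * (h⁻¹ * c) :=
        Subgroup.mem_centralizer_iff.mp hcC _ hg
      have comm2 : h⁻¹ * c = c * h⁻¹ := by
        rw [← mul_assoc] at comm
        exact mul_right_cancel comm
      refine ⟨⟨⟨(h⁻¹ * c)⁻¹, G.inv_mem hg⟩, ⟨c, hcC⟩⟩, ?_⟩
      rw [hφ]
      show (h⁻¹ * c)⁻¹ * c = h
      rw [comm2]
      group
  -- C ≃* H ⧸ G
  let ψ : C →* H ⧸ G := (QuotientGroup.mk' G).comp C.subtype
  have ψbij : Function.Bijective ψ := by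
    constructor
    · rw [injective_iff_map_eq_one]
      intro c h
      have : (c : H) ∈ G := (QuotientGroup.eq_one_iff _).mp h
      ext
      exact key c this c.2
    · intro q
      induction q using QuotientGroup.induction_on with
      | H h =>
        obtain ⟨c, hcC, hg⟩ := hcoset h
        refine ⟨⟨c, hcC⟩, ?_⟩
        show QuotientGroup.mk c = QuotientGroup.mk h
        refine QuotientGroup.eq.mpr ?_
        simpa using G.inv_mem hg
  obtain ⟨e⟩ := hquot
  exact ⟨((MulEquiv.ofBijective φ φbij).symm.trans
    ((MulEquiv.refl G).prodCongr ((MulEquiv.ofBijective ψ ψbij).trans e)))⟩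
end

section
/- Let L be a nonabelian group with trivial center and let G = ∏_{n∈ω} L be the countable cartesian power with canonical embeddings ι_n : L → G and projections π_m : G → L. If σ is an automorphism of G such that for all n, m the composite ι_n σ π_m is either the zero homomorphism (mapping everything to 1) or conjugation by some element of L, then for fixed m there is at most one n with ι_n σ π_m nonzero. -/
/-- The composite `ι_n σ π_m : L → L` of the canonical embedding into the `n`-th
coordinate of `G = L^ω`, the automorphism `σ`, and the projection onto the `m`-th
coordinate. -/
def coordHom {L : Type*} [Group L]
    (σ : (∀ _ : ℕ, L) ≃* (∀ _ : ℕ, L)) (n m : ℕ) : L →* L :=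
  (Pi.evalMonoidHom (fun _ : ℕ => L) m).comp
    (σ.toMonoidHom.comp (MonoidHom.mulSingle (fun _ : ℕ => L) n))

/-- Let `L ≠ 1` be a group with trivial center, `G = L^ω`, and `σ` an
automorphism of `G` such that each composite `ι_n σ π_m` is either zero (the constant-1
homomorphism) or conjugation by some element of `L`. Then for each fixed `m` there is at
most one `n` with `ι_n σ π_m ≠ 0`, i.e. the sets `A_n = {m : ι_n σ π_m ≠ 0}` are
pairwise disjoint. -/
theorem stmt_2 {L : Type*} [Group L] [Nontrivial L]
    (hZ : Subgroup.center L = ⊥)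
    (σ : (∀ _ : ℕ, L) ≃* (∀ _ : ℕ, L))
    (hdich : ∀ n m : ℕ, coordHom σ n m = 1 ∨
      ∃ t : L, ∀ x : L, coordHom σ n m x = t⁻¹ * x * t) :
    ∀ m n₁ n₂ : ℕ, coordHom σ n₁ m ≠ 1 → coordHom σ n₂ m ≠ 1 → n₁ = n₂ := by
  intro m n₁ n₂ h₁ h₂
  by_contra hne
  obtain ⟨t₁, ht₁⟩ := (hdich n₁ m).resolve_left h₁
  obtain ⟨t₂, ht₂⟩ := (hdich n₂ m).resolve_left h₂
  have key : ∀ x y : L, Commute (coordHom σ n₁ m x) (coordHom σ n₂ m y) := by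
    intro x y
    have hc : Commute (MonoidHom.mulSingle (fun _ : ℕ => L) n₁ x)
        (MonoidHom.mulSingle (fun _ : ℕ => L) n₂ y) :=
      Pi.mulSingle_commute (f := fun _ : ℕ => L) hne x y
    exact (hc.map σ.toMonoidHom).map (Pi.evalMonoidHom (fun _ : ℕ => L) m)
  have comm : ∀ a b : L, Commute a b := by
    intro a b
    have := key (t₁ * a * t₁⁻¹) (t₂ * b * t₂⁻¹)
    rw [ht₁, ht₂] at this
    simpa [mul_assoc] using this
  obtain ⟨a, ha⟩ := exists_ne (1 : L)
  have : a ∈ Subgroup.center L := Subgroup.mem_center_iff.mpr fun g => (comm a g).symm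
  rw [hZ, Subgroup.mem_bot] at this
  exact ha this
end

section
/- Let L be a group and G = L^ω its countable cartesian power. If σ : G → L is a group homomorphism and x ∈ G has x_n = 1 at coordinate n, and the restriction of σ to the n-th coordinate copy of L is surjective onto L, and L has trivial center, then σ kills the subgroup G_{ω∖{n}} of elements supported off n; in particular σ(x) = 1. -/
/-- Let `L` be a group with trivial center, `G = L^ω`, and `σ : G → L` a
homomorphism whose restriction to the `n`-th coordinate copy of `L` is surjective onto
`L`. Then `σ` kills every element supported off `n`; in particular, if `x n = 1` then
`σ x = 1`. -/
theorem stmt_3 {L : Type*} [Group L]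
    (hZ : Subgroup.center L = ⊥)
    (σ : (∀ _ : ℕ, L) →* L) (n : ℕ)
    (hsurj : Function.Surjective (σ.comp (MonoidHom.mulSingle (fun _ : ℕ => L) n))) :
    ∀ x : ∀ _ : ℕ, L, x n = 1 → σ x = 1 := by
  intro x hx
  have hmem : σ x ∈ Subgroup.center L := by
    rw [Subgroup.mem_center_iff]
    intro g
    obtain ⟨a, ha⟩ := hsurj g
    have hcomm : Pi.mulSingle n a * x = x * Pi.mulSingle n a := by
      funext i
      by_cases h : i = n
      · subst h; simp [hx]
      · simp [Pi.mulSingle_eq_of_ne h]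
    calc g * σ x = σ (Pi.mulSingle n a * x) := by
          rw [← ha]; simp [MonoidHom.comp_apply]
      _ = σ (x * Pi.mulSingle n a) := by rw [hcomm]
      _ = σ x * g := by rw [← ha]; simp [MonoidHom.comp_apply]
  rw [hZ] at hmem
  simpa using hmem
end

section
/- Let L be a group with trivial center and Aut L = Inn L (L is complete). Then L is not isomorphic to L × L. -/
/-- If `L ≠ 1` is complete (trivial center and every automorphism is
inner), then `L` is not isomorphic to `L × L`. -/
theorem stmt_6 {L : Type*} [Group L] [Nontrivial L]
    (hZ : Subgroup.center L = ⊥)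
    (hinn : ∀ φ : L ≃* L, ∃ g : L, φ = MulAut.conj g) :
    ¬ Nonempty (L ≃* L × L) := by
  rintro ⟨e⟩
  -- pull back the swap automorphism of L × L along e
  set σ : L × L ≃* L × L := MulEquiv.prodComm
  obtain ⟨g, hg⟩ := hinn (e.trans (σ.trans e.symm))
  -- hence swap is conjugation by c := e g
  set c : L × L := e g with hc
  have hconj : ∀ p : L × L, σ p = c * p * c⁻¹ := by
    intro p
    have hx := congrArg (fun f : L ≃* L => f (e.symm p)) hg
    simp only [MulEquiv.trans_apply, MulEquiv.apply_symm_apply] at hx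
    have := congrArg e hx
    simp only [MulEquiv.apply_symm_apply] at this
    rw [this]
    simp [MulAut.conj_apply, hc, mul_assoc]
  obtain ⟨x, hx⟩ := exists_ne (1 : L)
  have h := hconj (x, 1)
  have h1 : (1 : L) = c.1 * x * c.1⁻¹ := congrArg Prod.fst h
  apply hx
  have h2 : c.1 * x = c.1 := by
    rw [eq_comm, mul_inv_eq_one] at h1
    exact h1
  exact mul_left_cancel (a := c.1) (by rw [h2, mul_one])
end

section
/- Let L be a group, K a group with |K| < |L|, and suppose L is simple and there exist g ∈ L and m ∈ ω such that every element of L is a product of at most m conjugates of g. Then every homomorphism from the cartesian power L^κ to K is trivial, for any cardinal κ. -/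
/-!
The kernel of `σ` contains every element `S.mulIndicator (fun _ => a)`: the map
`a ↦ S.mulIndicator (fun _ => a)` is a homomorphism `L →* L^κ`, and its composite with `σ` is a
homomorphism out of the simple group `L` into the smaller group `K`, hence trivial. The uniform
bound `m` then writes any `x ∈ L^κ` as a product of `m` conjugates of such elements: the `j`-th
factor is, in coordinate `i`, the `j`-th conjugate of `g` in the expression of `x i`, or `1` if
that expression is shorter than `j`.
-/

universe u

theorem List.prod_ofFn_dite_lt {M : Type*} [Monoid M] {k m : ℕ} (f : Fin k → M) (hkm : k ≤ m) :
    (List.ofFn fun j : Fin m => if h : (j : ℕ) < k then f ⟨j, h⟩ else 1).prod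
      = (List.ofFn f).prod := by
  obtain ⟨d, rfl⟩ := Nat.exists_eq_add_of_le hkm
  rw [List.ofFn_add, List.prod_append]
  simp

theorem IsSimpleGroup.monoidHom_eq_one_of_mk_lt {L K : Type u} [Group L] [Group K]
    [IsSimpleGroup L] (hcard : Cardinal.mk K < Cardinal.mk L) (f : L →* K) : f = 1 := by
  rcases f.normal_ker.eq_bot_or_eq_top with hbot | htop
  · exact absurd (Cardinal.mk_le_of_injective (f.ker_eq_bot_iff.mp hbot)) hcard.not_ge
  · exact f.ker_eq_top_iff.mp htop

theorem Subgroup.Normal.mem_of_forall_eq_prod_conj {κ L : Type*} [Group L]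
    {N : Subgroup (κ → L)} (hN : N.Normal) {g : L} (hg : ∀ S : Set κ, S.mulIndicator (fun _ => g) ∈ N)
    (m : ℕ) {x : κ → L}
    (hx : ∀ i, ∃ k ≤ m, ∃ y : Fin k → L, x i = (List.ofFn fun j => (y j)⁻¹ * g * y j).prod) :
    x ∈ N := by
  classical
  choose k hkm y hy using hx
  let S (j : Fin m) : Set κ := {i | (j : ℕ) < k i}
  let z (j : Fin m) : κ → L := fun i => if h : (j : ℕ) < k i then y i ⟨j, h⟩ else 1
  have hxz : x = (List.ofFn fun j => (z j)⁻¹ * (S j).mulIndicator (fun _ => g) * z j).prod := by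
    funext i
    rw [Pi.list_prod_apply, List.map_ofFn, hy i, ← List.prod_ofFn_dite_lt _ (hkm i)]
    congr 1
    refine List.ofFn_inj.mpr (funext fun j => ?_)
    by_cases hj : (j : ℕ) < k i <;> simp [z, S, hj]
  rw [hxz]
  refine N.list_prod_mem fun c hc => ?_
  obtain ⟨j, rfl⟩ := List.mem_ofFn.mp hc
  simpa using hN.conj_mem _ (hg (S j)) (z j)⁻¹

/-- Let `L`, `K` be groups with `|K| < |L|`, `L` simple, and suppose there
are `g ∈ L` and `m ∈ ω` such that every element of `L` is a product of at most `m`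
conjugates of `g`. Then every homomorphism from a cartesian power `L^κ` to `K` is
trivial. -/
theorem stmt_8 {L K : Type u} [Group L] [Group K]
    (hcard : Cardinal.mk K < Cardinal.mk L)
    [IsSimpleGroup L]
    (g : L) (m : ℕ)
    (hconj : ∀ x : L, ∃ k ≤ m, ∃ y : Fin k → L, x = (List.ofFn (fun j => (y j)⁻¹ * g * y j)).prod)
    (κ : Type u) (σ : (∀ _ : κ, L) →* K) :
    σ = 1 := by
  have hind (S : Set κ) : S.mulIndicator (fun _ => g) ∈ σ.ker := by
    have := IsSimpleGroup.monoidHom_eq_one_of_mk_lt hcard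
      (σ.comp ((Set.mulIndicatorHom L S).comp (Pi.constMonoidHom κ L)))
    exact DFunLike.congr_fun this g
  ext x
  exact σ.normal_ker.mem_of_forall_eq_prod_conj hind m fun i => hconj (x i)
end

section
/- Let L be a group, g ∈ L, m ∈ ℕ, such that every element of L is a product of at most m conjugates of g. Let G = L^κ. If σ : L^κ → K is a homomorphism vanishing on every diagonal-type element ∏_{t∈A} e_t g (for all A ⊆ κ), then σ vanishes on all elements each of whose coordinates is a product of at most m conjugates of g, i.e. σ = 0. -/
open scoped Classical

/-- Let `L` be a group with `g ∈ L`, `m ∈ ℕ` such that every element of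
`L` is a product of at most `m` conjugates of `g`. If a homomorphism `σ : L^κ → K`
vanishes on every element `ḡ_A` (the element with coordinate `g` at indices in `A ⊆ κ`
and `1` elsewhere), then `σ` is trivial. -/
theorem stmt_10 {L K : Type*} [Group L] [Group K]
    (g : L) (m : ℕ)
    (hconj : ∀ x : L, ∃ k ≤ m, ∃ y : Fin k → L, x = (List.ofFn (fun j => (y j)⁻¹ * g * y j)).prod)
    {κ : Type*} (σ : (∀ _ : κ, L) →* K)
    (hdiag : ∀ A : Set κ, σ (fun i => if i ∈ A then g else 1) = 1) :
    σ = 1 := by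
  have main : ∀ n : ℕ, ∀ x : κ → L,
      (∀ i, ∃ l : List L, l.length ≤ n ∧ x i = (l.map fun a => a⁻¹ * g * a).prod) →
      σ x = 1 := by
    intro n
    induction n with
    | zero =>
      intro x hx
      have hx1 : x = 1 := by
        funext i
        obtain ⟨l, hl, hxl⟩ := hx i
        have : l = [] := List.length_eq_zero_iff.mp (Nat.le_zero.mp hl)
        simp [this] at hxl
        simpa using hxl
      rw [hx1, map_one]
    | succ n ih =>
      intro x hx
      choose l hl hxl using hx
      set Y : κ → L := fun i => (l i).headD 1 with hY
      set A : Set κ := {i : κ | l i ≠ []} with hA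
      clear_value A
      have hxuv : x =
          ((fun i => (Y i)⁻¹) * (fun i => if i ∈ A then g else 1) * Y)
          * (fun i => (((l i).tail).map fun a => a⁻¹ * g * a).prod) := by
        funext i
        simp only [Pi.mul_apply]
        by_cases h : l i = []
        · simp [hxl i, h, hY, hA]
        · obtain ⟨a, t, h'⟩ := List.exists_cons_of_ne_nil h
          have hmem : i ∈ A := by simp [hA, h]
          simp [hxl i, h', hY, hmem, mul_assoc]
      rw [hxuv, map_mul, map_mul, map_mul]
      rw [hdiag A]
      have h1 : σ (fun i => (Y i)⁻¹) = (σ Y)⁻¹ := by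
        rw [← map_inv]; rfl
      have h2 : σ (fun i => (((l i).tail).map fun a => a⁻¹ * g * a).prod) = 1 := by
        apply ih
        intro i
        refine ⟨(l i).tail, ?_, rfl⟩
        calc (l i).tail.length = (l i).length - 1 := by simp
        _ ≤ (n + 1) - 1 := Nat.sub_le_sub_right (hl i) 1
        _ = n := rfl
      rw [h1, h2, mul_one, mul_one, inv_mul_cancel]
  ext x
  show σ x = 1
  apply main m
  intro i
  obtain ⟨k, hk, y, hy⟩ := hconj (x i)
  refine ⟨List.ofFn y, by simpa using hk, ?_⟩
  rw [hy, List.map_ofFn]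
  rfl
end

section
/- Let G ◁ H with 𝔷G = 1, and let S ≤ Aut G with Inn G ∩ S = 1 and Aut G = (Inn G)S. Suppose γ : H/G → H is a set-theoretic section of the quotient map such that conjugation by γ(x) restricted to G lies in S for every x ∈ H/G. Then the map π : H/G → S sending x to γ(x)* ↾ G is a group homomorphism. -/
/-- Let `G ◁ H` with `𝔷G = 1`, and `S ≤ Aut G` with `Inn G ∩ S = 1` and
`Aut G = (Inn G) S`. If `γ : H/G → H` is a set-theoretic section of the quotient map
such that conjugation by `γ x` restricted to `G` lies in `S` for every `x`, then the
map `x ↦ (γ x)* ↾ G` is a group homomorphism into `S`. -/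
theorem stmt_14 {H : Type*} [Group H] (G : Subgroup H) [G.Normal]
    (hZ : Subgroup.center G = ⊥)
    (S : Subgroup (MulAut G))
    (hdisj : (MulAut.conj : G →* MulAut G).range ⊓ S = ⊥)
    (hfactor : ∀ α : MulAut G, ∃ g : G, ∃ s ∈ S, α = MulAut.conj g * s)
    (γ : H ⧸ G → H)
    (hsec : ∀ x : H ⧸ G, (γ x : H ⧸ G) = x)
    (hS : ∀ x : H ⧸ G, (MulAut.conjNormal (γ x) : MulAut G) ∈ S) :
    ∀ x y : H ⧸ G,
      (MulAut.conjNormal (γ (x * y)) : MulAut G) =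
        (MulAut.conjNormal (γ x) : MulAut G) * (MulAut.conjNormal (γ y) : MulAut G) := by
  intro x y
  -- γ (x*y) and γ x * γ y have the same image in H ⧸ G
  have hq : ((γ x * γ y : H) : H ⧸ G) = ((γ (x * y) : H) : H ⧸ G) := by
    rw [hsec]
    show ((γ x : H) : H ⧸ G) * ((γ y : H) : H ⧸ G) = x * y
    rw [hsec, hsec]
  have hg : (γ (x * y))⁻¹ * (γ x * γ y) ∈ G := by
    rw [← QuotientGroup.eq]
    exact hq.symm
  set g : G := ⟨(γ (x * y))⁻¹ * (γ x * γ y), hg⟩ with hgdef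
  have key : (MulAut.conjNormal (γ (x * y)) : MulAut G)⁻¹ *
      ((MulAut.conjNormal (γ x) : MulAut G) * (MulAut.conjNormal (γ y) : MulAut G)) =
      MulAut.conj g := by
    rw [← map_mul, ← MulAut.conjNormal_val (h := g), ← map_inv, ← map_mul]
  have hmem : MulAut.conj g ∈ (MulAut.conj : G →* MulAut G).range ⊓ S := by
    constructor
    · exact ⟨g, rfl⟩
    · rw [← key]
      exact S.mul_mem (S.inv_mem (hS _)) (S.mul_mem (hS x) (hS y))
  rw [hdisj] at hmem
  have : (MulAut.conjNormal (γ (x * y)) : MulAut G)⁻¹ *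
      ((MulAut.conjNormal (γ x) : MulAut G) * (MulAut.conjNormal (γ y) : MulAut G)) = 1 := by
    rw [key]; exact hmem
  rw [inv_mul_eq_one] at this
  exact this
end

section
/- Let L be a rigid group in the sense: (i) L is complete (trivial center and Aut L = Inn L); (ii) Hom(L^ω, S_ω) = 0; (iii) End L = Inn L ∪ {0}. Then G = L^ω satisfies: Aut G = Inn G ⋊ S_ω (with S_ω acting by coordinate permutations). -/
/-!
Restricting an automorphism `σ` of `L^ι` to the `n`-th factor and projecting to the `m`-th
coordinate gives an endomorphism `φ_{mn}` of `L` (`MulAut.piEntry σ m n`). For `n ≠ k` the images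
of `φ_{mn}` and `φ_{mk}` commute; as nonzero endomorphisms are inner, hence onto, and `L` has
trivial center, each row has at most one nonzero entry. A surjective `φ_{mn}` alone determines
the `m`-th coordinate of `σ x`, because anything supported off `n` centralizes its image.
Comparing `σ` with `σ⁻¹` shows that the nonzero entries form the graph of a permutation `π`,
so `σ` is `π` followed by coordinatewise conjugation.
-/

lemma eq_one_of_forall_commute {L : Type*} [Group L] (hZ : Subgroup.center L = ⊥) {z : L}
    (h : ∀ g, g * z = z * g) : z = 1 := by
  simpa [hZ] using Subgroup.mem_center_iff.mpr h

namespace MulAut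

variable {ι L : Type*} [DecidableEq ι] [Group L]

def piEntry (σ : MulAut (ι → L)) (m n : ι) : L →* L :=
  (Pi.evalMonoidHom (fun _ => L) m).comp (σ.toMonoidHom.comp (MonoidHom.mulSingle (fun _ => L) n))

@[simp]
lemma piEntry_apply (σ : MulAut (ι → L)) (m n : ι) (x : L) :
    piEntry σ m n x = σ (Pi.mulSingle n x) m := rfl

lemma exists_piEntry_ne_one [Nontrivial L] (σ : MulAut (ι → L)) (n : ι) :
    ∃ m, piEntry σ m n ≠ 1 := by
  obtain ⟨a, ha⟩ := exists_ne (1 : L)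
  have : σ (Pi.mulSingle n a) ≠ 1 := by simpa [Pi.mulSingle_eq_one_iff] using ha
  obtain ⟨m, hm⟩ := Function.ne_iff.mp this
  exact ⟨m, fun h => hm (DFunLike.congr_fun h a)⟩

lemma commute_piEntry (σ : MulAut (ι → L)) (m : ι) {n k : ι} (hnk : n ≠ k) (x y : L) :
    Commute (piEntry σ m n x) (piEntry σ m k y) := by
  rw [piEntry_apply, piEntry_apply]
  exact ((Pi.mulSingle_commute hnk x y).map σ).map (Pi.evalMonoidHom _ m)

lemma eq_of_surjective_piEntry [Nontrivial L] (hZ : Subgroup.center L = ⊥)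
    {σ : MulAut (ι → L)} {m n k : ι} (hn : Function.Surjective (piEntry σ m n))
    (hk : Function.Surjective (piEntry σ m k)) : n = k := by
  by_contra hnk
  obtain ⟨a, ha⟩ := exists_ne (1 : L)
  refine ha (eq_one_of_forall_commute hZ fun b => ?_)
  obtain ⟨x, rfl⟩ := hn b
  obtain ⟨y, rfl⟩ := hk a
  exact commute_piEntry σ m hnk x y

lemma apply_eq_piEntry (hZ : Subgroup.center L = ⊥) {σ : MulAut (ι → L)} {m n : ι}
    (hn : Function.Surjective (piEntry σ m n)) (x : ι → L) :
    σ x m = piEntry σ m n (x n) := by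
  have hvanish : ∀ y : ι → L, y n = 1 → σ y m = 1 := fun y hy =>
    eq_one_of_forall_commute hZ fun g => by
      obtain ⟨b, rfl⟩ := hn g
      have : Commute (Pi.mulSingle n b) y := by
        ext k
        rcases eq_or_ne k n with rfl | hk <;> simp [*]
      exact (this.map σ).map (Pi.evalMonoidHom _ m)
  have hrest : σ ((Pi.mulSingle n (x n))⁻¹ * x) m = 1 := hvanish _ (by simp)
  calc σ x m = σ (Pi.mulSingle n (x n) * ((Pi.mulSingle n (x n))⁻¹ * x)) m := by
        rw [mul_inv_cancel_left]
    _ = piEntry σ m n (x n) := by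
        rw [map_mul, Pi.mul_apply, hrest, mul_one, piEntry_apply]

lemma piEntry_piEntry_inv (hZ : Subgroup.center L = ⊥) {σ : MulAut (ι → L)} {m n : ι}
    (hn : Function.Surjective (piEntry σ m n)) (c : L) :
    piEntry σ m n (piEntry σ⁻¹ n m c) = c := by
  simp only [piEntry_apply σ⁻¹]
  rw [← apply_eq_piEntry hZ hn, ← MulAut.mul_apply, mul_inv_cancel, MulAut.one_apply,
    Pi.mulSingle_eq_same]

lemma surjective_piEntry_inv [Nontrivial L] (hZ : Subgroup.center L = ⊥)
    (hsurj : ∀ φ : L →* L, φ ≠ 1 → Function.Surjective φ) {σ : MulAut (ι → L)} {m n : ι}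
    (hn : Function.Surjective (piEntry σ m n)) : Function.Surjective (piEntry σ⁻¹ n m) := by
  refine hsurj _ fun h => ?_
  obtain ⟨a, ha⟩ := exists_ne (1 : L)
  have := piEntry_piEntry_inv hZ hn a
  rw [h, MonoidHom.one_apply, map_one] at this
  exact ha this.symm

lemma exists_perm_surjective_piEntry [Nontrivial L] (hZ : Subgroup.center L = ⊥)
    (hsurj : ∀ φ : L →* L, φ ≠ 1 → Function.Surjective φ) (σ : MulAut (ι → L)) :
    ∃ π : Equiv.Perm ι, ∀ n, Function.Surjective (piEntry σ (π n) n) := by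
  have hcol (τ : MulAut (ι → L)) (n : ι) : ∃ m, Function.Surjective (piEntry τ m n) :=
    (exists_piEntry_ne_one τ n).imp fun m => hsurj _
  choose p hp using hcol σ
  have hinj : Function.Injective p := fun n k hnk =>
    eq_of_surjective_piEntry hZ (hp n) (hnk ▸ hp k)
  have hp_surj : Function.Surjective p := fun m => by
    obtain ⟨n, hn⟩ := hcol σ⁻¹ m
    exact ⟨n, eq_of_surjective_piEntry hZ (surjective_piEntry_inv hZ hsurj (hp n)) hn⟩
  exact ⟨Equiv.ofBijective p ⟨hinj, hp_surj⟩, hp⟩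

theorem exists_conj_perm_apply [Nontrivial L] (hZ : Subgroup.center L = ⊥)
    (hEnd : ∀ φ : L →* L, (∃ g : L, ∀ x : L, φ x = g⁻¹ * x * g) ∨ φ = 1)
    (σ : MulAut (ι → L)) :
    ∃ (t : ι → L) (π : Equiv.Perm ι), ∀ x m, σ x m = t m * x (π⁻¹ m) * (t m)⁻¹ := by
  have hsurj (φ : L →* L) (hφ : φ ≠ 1) : Function.Surjective φ := fun y => by
    obtain ⟨g, hg⟩ := (hEnd φ).resolve_right hφ
    exact ⟨g * y * g⁻¹, by simp [hg, mul_assoc]⟩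
  obtain ⟨π, hπ⟩ := exists_perm_surjective_piEntry hZ hsurj σ
  have hinner (n : ι) : ∃ g : L, ∀ y, piEntry σ (π n) n y = g⁻¹ * y * g := by
    refine (hEnd _).resolve_right fun h => ?_
    obtain ⟨a, ha⟩ := exists_ne (1 : L)
    obtain ⟨b, hb⟩ := hπ n a
    exact ha (by simp [← hb, h])
  choose g hg using hinner
  refine ⟨fun m => (g (π⁻¹ m))⁻¹, π, fun x m => ?_⟩
  obtain ⟨n, rfl⟩ := π.surjective m
  simp [apply_eq_piEntry hZ (hπ n), hg]

theorem eq_of_conj_perm_apply [Nontrivial L] (hZ : Subgroup.center L = ⊥)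
    {t t' : ι → L} {π π' : Equiv.Perm ι}
    (h : ∀ (x : ι → L) m, t m * x (π⁻¹ m) * (t m)⁻¹ = t' m * x (π'⁻¹ m) * (t' m)⁻¹) :
    t = t' ∧ π = π' := by
  obtain ⟨a, ha⟩ := exists_ne (1 : L)
  have hπ : π⁻¹ = π'⁻¹ := Equiv.ext fun m => by
    by_contra hne
    have := h (Pi.mulSingle (π⁻¹ m) a) m
    rw [Pi.mulSingle_eq_same, Pi.mulSingle_eq_of_ne' hne, mul_one, mul_inv_cancel] at this
    exact ha (by simpa using this)
  refine ⟨funext fun m => ?_, inv_injective hπ⟩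
  have hcentral : (t' m)⁻¹ * t m = 1 := eq_one_of_forall_commute hZ fun y => by
    calc y * ((t' m)⁻¹ * t m) = (t' m)⁻¹ * (t' m * y * (t' m)⁻¹) * t m := by group
      _ = (t' m)⁻¹ * (t m * y * (t m)⁻¹) * t m := by rw [h (fun _ => y) m]
      _ = (t' m)⁻¹ * t m * y := by group
  exact (inv_mul_eq_one.mp hcentral).symm

end MulAut

theorem stmt_18_general {L : Type*} [Group L] [Nontrivial L]
    (hZ : Subgroup.center L = ⊥)
    (hEnd : ∀ φ : L →* L, (∃ g : L, ∀ x : L, φ x = g⁻¹ * x * g) ∨ φ = 1)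
    (Φ : Equiv.Perm ℕ →* MulAut (∀ _ : ℕ, L))
    (hΦ : ∀ (π : Equiv.Perm ℕ) (x : ∀ _ : ℕ, L) (n : ℕ), Φ π x n = x (π⁻¹ n)) :
    ∀ σ : MulAut (∀ _ : ℕ, L),
      ∃! tp : (∀ _ : ℕ, L) × Equiv.Perm ℕ, σ = MulAut.conj tp.1 * Φ tp.2 := by
  intro σ
  have hform (t : ℕ → L) (π : Equiv.Perm ℕ) (x : ℕ → L) (m : ℕ) :
      (MulAut.conj t * Φ π) x m = t m * x (π⁻¹ m) * (t m)⁻¹ := by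
    simp [hΦ]
  obtain ⟨t, π, hσ⟩ := MulAut.exists_conj_perm_apply hZ hEnd σ
  refine ⟨(t, π), MulEquiv.ext fun x => funext fun m => by rw [hσ, hform], ?_⟩
  rintro ⟨t', π'⟩ (h' : σ = MulAut.conj t' * Φ π')
  have heq (x : ℕ → L) (m : ℕ) : t' m * x (π'⁻¹ m) * (t' m)⁻¹ = t m * x (π⁻¹ m) * (t m)⁻¹ := by
    rw [← hform, ← h', hσ]
  obtain ⟨rfl, rfl⟩ := MulAut.eq_of_conj_perm_apply hZ heq
  rfl

/-- Let `L` be rigid: (i) complete (trivial center, all automorphisms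
inner); (ii) `Hom(L^ω, S_ω) = 0`; (iii) `End L = Inn L ∪ {0}`. Then every automorphism
of `G = L^ω` factors uniquely as (conjugation by `t ∈ G`) ∘ (coordinate permutation),
i.e. `Aut G = Inn G ⋊ S_ω`. -/
theorem stmt_18 {L : Type*} [Group L] [Nontrivial L]
    (hZ : Subgroup.center L = ⊥)
    (hcomplete : ∀ φ : L ≃* L, ∃ g : L, φ = MulAut.conj g)
    (hhom : ∀ f : (∀ _ : ℕ, L) →* Equiv.Perm ℕ, f = 1)
    (hEnd : ∀ φ : L →* L, (∃ g : L, ∀ x : L, φ x = g⁻¹ * x * g) ∨ φ = 1)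
    (Φ : Equiv.Perm ℕ →* MulAut (∀ _ : ℕ, L))
    (hΦ : ∀ (π : Equiv.Perm ℕ) (x : ∀ _ : ℕ, L) (n : ℕ), Φ π x n = x (π⁻¹ n)) :
    ∀ σ : MulAut (∀ _ : ℕ, L),
      ∃! tp : (∀ _ : ℕ, L) × Equiv.Perm ℕ, σ = MulAut.conj tp.1 * Φ tp.2 :=
  stmt_18_general hZ hEnd Φ hΦ
end

section
/- Let L be a rigid group (complete, Hom(L^ω, S_ω) = 0, End L = Inn L ∪ {0}) and G = L^ω. Then G is a Hall group: every group H containing G as a normal subgroup with H/G ≅ G is isomorphic to G. -/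
/-!
Let `G = L^ω`. Since `L` is centreless and every nontrivial endomorphism of `L` is inner, an
automorphism `α` of `G` maps each factor `L_i` onto a factor `L_{σ(α) i}`; this gives a
homomorphism `σ : Aut G → S_ω` whose kernel is `Inn G` (an automorphism fixing every factor acts
on the factors by conjugations, and since `G` is centreless it is then conjugation by the element
they define). For `N ◁ H` with `N ≅ G`, the composite `H → Aut N → S_ω` kills `N`, so it factors
through `H/N ≅ G` and is trivial because `Hom(G, S_ω) = 0`. Hence `H` acts on `N` by inner
automorphisms, so `H = N × C_H(N)` with `C_H(N) ≅ H/N`, and `H ≅ G × G ≅ G`.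
-/

open Function Pi Subgroup
open scoped Pointwise

theorem MonoidHom.bijective_of_ne_one {L : Type*} [Group L]
    (hEnd : ∀ φ : L →* L, (∃ g : L, ∀ x : L, φ x = g⁻¹ * x * g) ∨ φ = 1)
    {φ : L →* L} (hφ : φ ≠ 1) : Bijective φ := by
  obtain ⟨g, hg⟩ := (hEnd φ).resolve_right hφ
  have : ⇑φ = MulAut.conj g⁻¹ := funext fun x => by simp [hg]
  exact this ▸ (MulAut.conj g⁻¹).bijective

namespace Pi

variable {ι L : Type*} [Group L]

theorem center_eq_bot (hZ : center L = ⊥) : center (ι → L) = ⊥ := by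
  rw [Subgroup.center_pi, hZ, pi_bot]

variable [DecidableEq ι]

theorem mul_mulSingle_mul_inv (z : ι → L) (i : ι) (x : L) :
    z * mulSingle i x * z⁻¹ = mulSingle i (z i * x * (z i)⁻¹) := by
  ext m
  rcases eq_or_ne m i with rfl | hm <;> simp [mulSingle_eq_of_ne, *]

theorem commute_mulSingle_of_apply_eq_one {z : ι → L} {i : ι} (hz : z i = 1) (x : L) :
    Commute z (mulSingle i x) := by
  ext m
  rcases eq_or_ne m i with rfl | hm <;> simp [mulSingle_eq_of_ne, *]

theorem apply_eq_one_of_forall_commute_mulSingle (hZ : center L = ⊥) {z : ι → L} {i : ι}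
    (h : ∀ x, Commute z (mulSingle i x)) : z i = 1 := by
  have hcen : z i ∈ center L := mem_center_iff.mpr fun y => by
    simpa using (congrFun (h y).eq i).symm
  simpa [hZ] using hcen

theorem eq_one_of_forall_commute_mulSingle (hZ : center L = ⊥) {z : ι → L}
    (h : ∀ i x, Commute z (mulSingle i x)) : z = 1 :=
  funext fun i => apply_eq_one_of_forall_commute_mulSingle hZ (h i)

theorem eq_mulSingle_of_forall_commute (hZ : center L = ⊥) {z : ι → L} {i : ι}
    (h : ∀ j ≠ i, ∀ x, Commute z (mulSingle j x)) : z = mulSingle i (z i) := by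
  ext j
  rcases eq_or_ne j i with rfl | hj
  · simp
  · rw [mulSingle_eq_of_ne hj, apply_eq_one_of_forall_commute_mulSingle hZ (h j hj)]

/-- For infinite `ι` the elements `mulSingle i x` do not generate `ι → L`; conjugation and the
trivial centre make up for that. -/
theorem mulAut_ext (hZ : center L = ⊥) {α β : MulAut (ι → L)}
    (h : ∀ i x, α (mulSingle i x) = β (mulSingle i x)) : α = β := by
  set γ := β⁻¹ * α
  have hγ : ∀ i x, γ (mulSingle i x) = mulSingle i x := fun i x => by
    simp [γ, MulAut.mul_apply, h]
  suffices γ = 1 from (inv_mul_eq_one.mp this).symm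
  refine MulEquiv.ext fun z => ?_
  have hcomm : z⁻¹ * γ z = 1 := eq_one_of_forall_commute_mulSingle hZ fun i x => by
    have hconj := congrArg γ (mul_mulSingle_mul_inv z i x)
    rw [map_mul, map_mul, map_inv, hγ, hγ, ← mul_mulSingle_mul_inv] at hconj
    rw [Commute, SemiconjBy, mul_assoc, mul_inv_eq_iff_eq_mul.mp hconj]
    group
  exact (inv_mul_eq_one.mp hcomm).symm

def component (α : MulAut (ι → L)) (i j : ι) : L →* L :=
  (evalMonoidHom (fun _ => L) j).comp
    ((α : (ι → L) →* (ι → L)).comp (MonoidHom.mulSingle (fun _ => L) i))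

@[simp]
theorem component_apply (α : MulAut (ι → L)) (i j : ι) (x : L) :
    component α i j x = α (mulSingle i x) j := rfl

theorem exists_component_ne_one [Nontrivial L] (α : MulAut (ι → L)) (i : ι) :
    ∃ j, component α i j ≠ 1 := by
  obtain ⟨a, ha⟩ := exists_ne (1 : L)
  have hαa : α (mulSingle i a) ≠ 1 := by simpa using ha
  obtain ⟨j, hj⟩ := Function.ne_iff.mp hαa
  exact ⟨j, fun h => hj (by simpa using DFunLike.congr_fun h a)⟩

section Centerless

variable (hZ : center L = ⊥) (α : MulAut (ι → L)) {i j : ι}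
include hZ

theorem apply_eq_one_of_surjective_component (hα : Surjective (component α i j)) {z : ι → L}
    (hz : z i = 1) : α z j = 1 := by
  have hcen : α z j ∈ center L := mem_center_iff.mpr fun y => by
    obtain ⟨x, rfl⟩ := hα y
    exact (congrFun ((commute_mulSingle_of_apply_eq_one hz x).map α).eq j).symm
  simpa [hZ] using hcen

theorem symm_mulSingle_eq_mulSingle (hα : Surjective (component α i j)) (a : L) :
    α.symm (mulSingle j a) = mulSingle i (α.symm (mulSingle j a) i) := by
  refine eq_mulSingle_of_forall_commute hZ fun m hm x => ?_
  have hjm : α (mulSingle m x) j = 1 :=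
    apply_eq_one_of_surjective_component hZ α hα (mulSingle_eq_of_ne' (M := fun _ => L) hm x)
  simpa using ((commute_mulSingle_of_apply_eq_one hjm a).symm.map α.symm)

theorem not_injective_component [Nontrivial L] (hα : Surjective (component α i j)) {k : ι}
    (hk : k ≠ j) : ¬ Injective (component α i k) := by
  intro hinj
  obtain ⟨a, ha⟩ := exists_ne (1 : L)
  set u := α.symm (mulSingle j a) with hu_def
  have hu : u = mulSingle i (u i) := symm_mulSingle_eq_mulSingle hZ α hα a
  have hui : u i = 1 := hinj <| by
    rw [component_apply, ← hu, hu_def, MulEquiv.apply_symm_apply, mulSingle_eq_of_ne hk, map_one]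
  have h1 : (mulSingle j a : ι → L) = 1 := by
    rw [← α.apply_symm_apply (mulSingle j a : ι → L), ← hu_def, hu, hui, mulSingle_one,
      map_one]
  exact ha (mulSingle_eq_one_iff.mp h1)

end Centerless

variable (L) in
def factor (i : ι) : Subgroup (ι → L) := (MonoidHom.mulSingle (fun _ => L) i).range

theorem mulSingle_mem_factor (i : ι) (x : L) : mulSingle i x ∈ factor L i := ⟨x, rfl⟩

instance (i : ι) : (factor L i).Normal where
  conj_mem := by
    rintro _ ⟨x, rfl⟩ z
    rw [MonoidHom.mulSingle_apply, mul_mulSingle_mul_inv]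
    exact mulSingle_mem_factor i _

theorem factor_injective [Nontrivial L] : Injective (factor L : ι → Subgroup (ι → L)) := by
  intro i j hij
  by_contra hne
  obtain ⟨a, ha⟩ := exists_ne (1 : L)
  obtain ⟨y, hy⟩ : mulSingle i a ∈ factor L j := hij ▸ mulSingle_mem_factor i a
  have := congrFun hy i
  simp [mulSingle_eq_of_ne hne] at this
  exact ha this.symm

theorem smul_factor_eq_of_map_mulSingle {α : MulAut (ι → L)} {i j : ι} {g : L}
    (h : ∀ x, α (mulSingle i x) = mulSingle j (g⁻¹ * x * g)) :
    α • factor L i = factor L j := by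
  ext z
  rw [mem_smul_pointwise_iff_exists]
  constructor
  · rintro ⟨_, ⟨x, rfl⟩, rfl⟩
    exact ⟨g⁻¹ * x * g, (h x).symm⟩
  · rintro ⟨y, rfl⟩
    refine ⟨mulSingle i (g * y * g⁻¹), mulSingle_mem_factor i _, ?_⟩
    rw [MulAut.smul_def, h]
    simp [mul_assoc]

section Rigid

variable [Nontrivial L] (hZ : center L = ⊥)
  (hEnd : ∀ φ : L →* L, (∃ g : L, ∀ x : L, φ x = g⁻¹ * x * g) ∨ φ = 1)
include hZ hEnd

theorem exists_map_mulSingle_eq (α : MulAut (ι → L)) (i : ι) :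
    ∃ j, ∃ g : L, ∀ x, α (mulSingle i x) = mulSingle j (g⁻¹ * x * g) := by
  obtain ⟨j, hj⟩ := exists_component_ne_one α i
  obtain ⟨g, hg⟩ := (hEnd _).resolve_right hj
  refine ⟨j, g, fun x => funext fun k => ?_⟩
  rcases eq_or_ne k j with rfl | hk
  · simpa using hg x
  · have hk1 : component α i k = 1 := by_contra fun h =>
      not_injective_component hZ α (MonoidHom.bijective_of_ne_one hEnd hj).2 hk
        (MonoidHom.bijective_of_ne_one hEnd h).1
    simpa [hk] using DFunLike.congr_fun hk1 x

theorem exists_smul_factor_eq (α : MulAut (ι → L)) (i : ι) :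
    ∃ j, α • factor L i = factor L j :=
  let ⟨j, _, hg⟩ := exists_map_mulSingle_eq hZ hEnd α i
  ⟨j, smul_factor_eq_of_map_mulSingle hg⟩

noncomputable def factorIndex (α : MulAut (ι → L)) (i : ι) : ι :=
  (exists_smul_factor_eq hZ hEnd α i).choose

theorem factor_factorIndex (α : MulAut (ι → L)) (i : ι) :
    factor L (factorIndex hZ hEnd α i) = α • factor L i :=
  (exists_smul_factor_eq hZ hEnd α i).choose_spec.symm

noncomputable def factorPerm : MulAut (ι → L) →* Equiv.Perm ι :=
  letI : MulAction (MulAut (ι → L)) ι :=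
    { smul := factorIndex hZ hEnd
      one_smul i := factor_injective (L := L) <|
        (factor_factorIndex hZ hEnd 1 i).trans (one_smul _ _)
      mul_smul α β i := factor_injective (L := L) <| by
        change factor L (factorIndex hZ hEnd (α * β) i) =
          factor L (factorIndex hZ hEnd α (factorIndex hZ hEnd β i))
        rw [factor_factorIndex, factor_factorIndex, factor_factorIndex, mul_smul] }
  MulAction.toPermHom _ _

theorem factor_factorPerm_apply (α : MulAut (ι → L)) (i : ι) :
    factor L (factorPerm hZ hEnd α i) = α • factor L i :=
  factor_factorIndex hZ hEnd α i

theorem factorPerm_conj (g : ι → L) : factorPerm hZ hEnd (MulAut.conj g) = 1 :=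
  Equiv.ext fun i => factor_injective (L := L) <| by
    rw [factor_factorPerm_apply, Normal.conj_smul_eq_self, Equiv.Perm.one_apply]

theorem exists_conj_eq_of_factorPerm_eq_one {α : MulAut (ι → L)}
    (hα : factorPerm hZ hEnd α = 1) : ∃ g, MulAut.conj g = α := by
  have hfix : ∀ i, ∃ g : L, ∀ x, α (mulSingle i x) = mulSingle i (g⁻¹ * x * g) := fun i => by
    obtain ⟨j, g, hg⟩ := exists_map_mulSingle_eq hZ hEnd α i
    obtain rfl : j = i := factor_injective (L := L) <| by
      rw [← smul_factor_eq_of_map_mulSingle hg, ← factor_factorPerm_apply hZ hEnd, hα,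
        Equiv.Perm.one_apply]
    exact ⟨g, hg⟩
  choose g hg using hfix
  refine ⟨fun i => (g i)⁻¹, mulAut_ext hZ fun i x => ?_⟩
  rw [MulAut.conj_apply, mul_mulSingle_mul_inv, hg, inv_inv]

theorem ker_factorPerm :
    (factorPerm hZ hEnd).ker = (MulAut.conj : (ι → L) →* MulAut (ι → L)).range := by
  ext α
  refine ⟨exists_conj_eq_of_factorPerm_eq_one hZ hEnd, ?_⟩
  rintro ⟨g, rfl⟩
  exact factorPerm_conj hZ hEnd g

end Rigid

end Pi

theorem MulAut.congr_conj {G G' : Type*} [Group G] [Group G'] (e : G ≃* G') (g : G) :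
    MulAut.congr e (MulAut.conj g) = MulAut.conj (e g) := by
  ext; simp

theorem MulAut.congr_mem_range_conj_iff {G G' : Type*} [Group G] [Group G'] (e : G ≃* G')
    {α : MulAut G} :
    MulAut.congr e α ∈ (MulAut.conj : G' →* MulAut G').range ↔
      α ∈ (MulAut.conj : G →* MulAut G).range := by
  constructor
  · rintro ⟨g, hg⟩
    refine ⟨e.symm g, (MulAut.congr e).injective ?_⟩
    rw [MulAut.congr_conj, e.apply_symm_apply, hg]
  · rintro ⟨g, rfl⟩
    exact ⟨e g, (MulAut.congr_conj e g).symm⟩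

theorem Subgroup.center_eq_bot_of_mulEquiv {G G' : Type*} [Group G] [Group G'] (e : G ≃* G')
    (h : center G' = ⊥) : center G = ⊥ :=
  eq_bot_iff_forall _ |>.mpr fun x hx => by
    have hex : e x ∈ center G' := MulEquivClass.apply_mem_center e hx
    rwa [h, mem_bot, map_eq_one_iff e e.injective] at hex

def MulEquiv.sumArrowEquivProdArrow (α β M : Type*) [Mul M] :
    (α ⊕ β → M) ≃* (α → M) × (β → M) :=
  { Equiv.sumArrowEquivProdArrow α β M with map_mul' := fun _ _ => rfl }

namespace Subgroup

variable {H : Type*} [Group H] (N : Subgroup H) [N.Normal]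

theorem isComplement'_centralizer (hZ : center N = ⊥)
    (hinner : ∀ h : H, MulAut.conjNormal h ∈ (MulAut.conj : N →* MulAut N).range) :
    N.IsComplement' (centralizer N) := by
  refine isComplement'_of_disjoint_and_mul_eq_univ ?_ ?_
  · rw [disjoint_iff_inf_le]
    rintro x ⟨hxN, hxC⟩
    have hx : (⟨x, hxN⟩ : N) ∈ center N :=
      mem_center_iff.mpr fun y => Subtype.ext (mem_centralizer_iff.mp hxC y y.2)
    simpa [hZ] using hx
  · refine Set.eq_univ_of_forall fun h => ?_
    obtain ⟨n, hn⟩ := hinner h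
    refine Set.mem_mul.mpr
      ⟨n, n.2, (n : H)⁻¹ * h, mem_centralizer_iff.mpr fun x hx => ?_, by group⟩
    have hconj := congrArg (fun φ : MulAut N => (φ ⟨x, hx⟩ : H)) hn
    simp only [MulAut.conj_apply, MulAut.conjNormal_apply, coe_mul, coe_inv] at hconj
    calc x * ((n : H)⁻¹ * h) = (n : H)⁻¹ * (n * x * (n : H)⁻¹) * h := by group
      _ = (n : H)⁻¹ * h * x := by rw [hconj]; group

noncomputable def mulEquivProdQuotient (hZ : center N = ⊥)
    (hinner : ∀ h : H, MulAut.conjNormal h ∈ (MulAut.conj : N →* MulAut N).range) :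
    H ≃* N × (H ⧸ N) :=
  have hc := N.isComplement'_centralizer hZ hinner
  (MulEquiv.ofBijective (MonoidHom.noncommCoprod N.subtype (centralizer N).subtype
    fun n c => mem_centralizer_iff.mp c.2 n n.2) hc).symm.trans
    (MulEquiv.prodCongr (MulEquiv.refl N) hc.symm.QuotientMulEquiv.symm)

theorem conjNormal_mem_range_conj {P : Type*} [Group P] {π : MulAut N →* P}
    (hπ : π.ker = (MulAut.conj : N →* MulAut N).range) (hP : ∀ f : H ⧸ N →* P, f = 1)
    (h : H) : MulAut.conjNormal h ∈ (MulAut.conj : N →* MulAut N).range := by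
  let ρ := π.comp MulAut.conjNormal
  have hN : N ≤ ρ.ker := fun n hn => by
    rw [MonoidHom.mem_ker, MonoidHom.comp_apply, ← MonoidHom.mem_ker, hπ]
    exact ⟨⟨n, hn⟩, MulAut.conjNormal_val.symm⟩
  rw [← hπ, MonoidHom.mem_ker]
  simpa [ρ] using DFunLike.congr_fun (hP (QuotientGroup.lift N ρ hN)) (h : H ⧸ N)

end Subgroup

theorem stmt_19_general {L : Type*} [Group L] [Nontrivial L]
    (hZ : Subgroup.center L = ⊥)
    (hhom : ∀ f : (∀ _ : ℕ, L) →* Equiv.Perm ℕ, f = 1)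
    (hEnd : ∀ φ : L →* L, (∃ g : L, ∀ x : L, φ x = g⁻¹ * x * g) ∨ φ = 1)
    {H : Type*} [Group H] (N : Subgroup H) [N.Normal]
    (hN : Nonempty (N ≃* (∀ _ : ℕ, L)))
    (hQ : Nonempty ((H ⧸ N) ≃* (∀ _ : ℕ, L))) :
    Nonempty (H ≃* (∀ _ : ℕ, L)) := by
  obtain ⟨e⟩ := hN
  obtain ⟨q⟩ := hQ
  have hZN : center N = ⊥ := center_eq_bot_of_mulEquiv e (Pi.center_eq_bot hZ)
  have hker : ((Pi.factorPerm hZ hEnd).comp (MulAut.congr e).toMonoidHom).ker =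
      (MulAut.conj : N →* MulAut N).range := by
    ext α
    rw [MonoidHom.mem_ker, MonoidHom.comp_apply, ← MonoidHom.mem_ker, Pi.ker_factorPerm]
    exact MulAut.congr_mem_range_conj_iff e
  have hP : ∀ f : H ⧸ N →* Equiv.Perm ℕ, f = 1 := fun f => by
    simpa [MonoidHom.comp_assoc] using
      congrArg (·.comp q.toMonoidHom) (hhom (f.comp q.symm.toMonoidHom))
  have hGG : ((ℕ → L) × (ℕ → L)) ≃* (ℕ → L) :=
    (MulEquiv.sumArrowEquivProdArrow ℕ ℕ L).symm.trans
      (MulEquiv.arrowCongr Equiv.natSumNatEquivNat (MulEquiv.refl L))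
  exact ⟨(N.mulEquivProdQuotient hZN (N.conjNormal_mem_range_conj hker hP)).trans
    ((e.prodCongr q).trans hGG)⟩

/-- Let `L` be rigid (complete, `Hom(L^ω, S_ω) = 0`,
`End L = Inn L ∪ {0}`) and `G = L^ω`. Then `G` is a Hall group: every group `H`
containing a normal subgroup isomorphic to `G` with quotient isomorphic to `G` is
itself isomorphic to `G`. -/
theorem stmt_19 {L : Type*} [Group L] [Nontrivial L]
    (hZ : Subgroup.center L = ⊥)
    (hcomplete : ∀ φ : L ≃* L, ∃ g : L, φ = MulAut.conj g)
    (hhom : ∀ f : (∀ _ : ℕ, L) →* Equiv.Perm ℕ, f = 1)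
    (hEnd : ∀ φ : L →* L, (∃ g : L, ∀ x : L, φ x = g⁻¹ * x * g) ∨ φ = 1)
    {H : Type*} [Group H] (N : Subgroup H) [N.Normal]
    (hN : Nonempty (N ≃* (∀ _ : ℕ, L)))
    (hQ : Nonempty ((H ⧸ N) ≃* (∀ _ : ℕ, L))) :
    Nonempty (H ≃* (∀ _ : ℕ, L)) :=
  stmt_19_general hZ hhom hEnd N hN hQ
end
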